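/- Random-turn lower value: for every finite game tree G, there exists a pure strategy σ for Alice such that for every pure strategy τ for Bob, the probability that Alice wins the random-turn game satisfies Pr(G, σ, τ) ≥ P(G). -/

import Mathlib

/-- The two players. -/
inductive Player : Type
  | alice
  | bob

/-- A finite game tree: either a leaf labeled with the player who wins there,
or an internal node with a nonempty finite list of children (the positions
either player may move to), encoded as a head child `first` plus the
remaining children `rest`. -/
inductive GameTree : Type
  | leaf (winner : Player)
  | node (first : GameTree) (rest : List GameTree)

namespace GameTree

/-- The random-turn value (probability that Alice wins under optimal play when
a fair coin decides who moves): `P (leaf alice) = 1`, `P (leaf bob) = 0`, and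
at an internal node it is the average of the maximum and minimum of the values
of the children. -/
noncomputable def P : GameTree → ℝ
  | leaf .alice => 1
  | leaf .bob => 0
  | node c cs =>
      ((cs.attach.map fun w => P w.1).foldr max (P c) +
       (cs.attach.map fun w => P w.1).foldr min (P c)) / 2
decreasing_by
  all_goals simp only [GameTree.node.sizeOf_spec]
  all_goals try omega
  all_goals (have h := List.sizeOf_lt_of_mem w.2; omega)

/-- A pure strategy: a function assigning to each internal node one of its
children. -/
structure Strategy where
  move : GameTree → GameTree
  move_mem : ∀ (c : GameTree) (cs : List GameTree), move (node c cs) ∈ c :: cs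

theorem sizeOf_lt_of_mem_children {w c : GameTree} {cs : List GameTree}
    (h : w ∈ c :: cs) : sizeOf w < sizeOf (node c cs) := by
  rcases List.mem_cons.mp h with rfl | h
  · simp only [node.sizeOf_spec]; omega
  · have := List.sizeOf_lt_of_mem h
    simp only [node.sizeOf_spec]; omega

/-- The probability that Alice wins the random-turn game when Alice plays the
pure strategy `σ` and Bob plays the pure strategy `τ`: at each internal node a
fair coin flip decides which player's strategy makes the move. -/
noncomputable def Pr (σ τ : Strategy) : GameTree → ℝ
  | leaf .alice => 1
  | leaf .bob => 0
  | node c cs =>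
      (Pr σ τ (σ.move (node c cs)) + Pr σ τ (τ.move (node c cs))) / 2
termination_by g => sizeOf g
decreasing_by
  · exact sizeOf_lt_of_mem_children (σ.move_mem c cs)
  · exact sizeOf_lt_of_mem_children (τ.move_mem c cs)

/-!
Alice plays greedily, always moving to a child of maximal value `P`. At a node her move then has
value `max`, and whatever Bob picks has value at least `min`; so by induction on the tree her
winning probability is at least `(max + min) / 2 = P`.
-/

end GameTree

namespace List

variable {α : Type*} [LinearOrder α]

theorem foldr_max_le {l : List α} {a b : α} (ha : a ≤ b) (h : ∀ x ∈ l, x ≤ b) :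
    l.foldr max a ≤ b := by
  induction l with
  | nil => exact ha
  | cons x l ih =>
    exact max_le (h x mem_cons_self) (ih fun y hy ↦ h y (mem_cons_of_mem x hy))

theorem foldr_min_le_of_mem {l : List α} {a x : α} (hx : x ∈ a :: l) : l.foldr min a ≤ x := by
  cases hx with
  | head =>
    induction l with
    | nil => exact le_rfl
    | cons y l ih => exact min_le_of_right_le ih
  | tail _ hx => exact min_le_of_le' a hx le_rfl

end List

namespace GameTree

theorem P_node_le {c x y : GameTree} {cs : List GameTree}
    (hx : ∀ z ∈ c :: cs, P z ≤ P x) (hy : y ∈ c :: cs) :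
    P (node c cs) ≤ (P x + P y) / 2 := by
  have hmax : (cs.map P).foldr max (P c) ≤ P x :=
    List.foldr_max_le (hx c List.mem_cons_self) <|
      List.forall_mem_map.mpr fun z hz ↦ hx z (List.mem_cons_of_mem c hz)
  have hmin : (cs.map P).foldr min (P c) ≤ P y :=
    List.foldr_min_le_of_mem (List.map_cons ▸ List.mem_map_of_mem hy)
  rw [P, List.attach_map_val (f := P)]
  linarith

namespace Strategy

variable {α : Type*} [LinearOrder α]

theorem exists_mem_forall_le (f : GameTree → α) (c : GameTree) (cs : List GameTree) :
    ∃ x ∈ c :: cs, ∀ z ∈ c :: cs, f z ≤ f x :=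
  Set.exists_max_image _ f (c :: cs).finite_toSet ⟨c, List.mem_cons_self⟩

noncomputable def greedy (f : GameTree → α) : Strategy where
  move
    | leaf w => leaf w
    | node c cs => (exists_mem_forall_le f c cs).choose
  move_mem c cs := (exists_mem_forall_le f c cs).choose_spec.1

theorem le_greedy_move (f : GameTree → α) {c z : GameTree} {cs : List GameTree}
    (hz : z ∈ c :: cs) : f z ≤ f ((greedy f).move (node c cs)) :=
  (exists_mem_forall_le f c cs).choose_spec.2 z hz

end Strategy

open Strategy

theorem P_le_Pr_greedy (τ : Strategy) (g : GameTree) : P g ≤ Pr (greedy P) τ g := by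
  fun_induction Pr (greedy P) τ g with
  | case1 | case2 => simp [P]
  | case3 c cs ihσ ihτ =>
    calc P (node c cs)
        ≤ (P ((greedy P).move (node c cs)) + P (τ.move (node c cs))) / 2 :=
          P_node_le (fun _ ↦ le_greedy_move P) (τ.move_mem c cs)
      _ ≤ _ := by linarith

/-- **Random-turn lower value.** For every finite game tree `G`, Alice has a
pure strategy `σ` guaranteeing her a winning probability of at least `P(G)`
against every pure strategy `τ` of Bob. -/
theorem randomTurn_lower_value (G : GameTree) :
    ∃ σ : Strategy, ∀ τ : Strategy, Pr σ τ G ≥ P G :=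
  ⟨greedy P, fun τ ↦ P_le_Pr_greedy τ G⟩

end GameTree
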